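/- For all n ≥ 2, a permutation π of {1,…,n} satisfies ssc(π) ≤ n−2 (i.e., π is (n−2)-stack sortable) if and only if π does not end with the suffix n,1. -/

import Mathlib

/-- The largest letter of a word (`0` for the empty word). -/
def listMax (l : List ℕ) : ℕ := l.foldr max 0

lemma listMax_mem {l : List ℕ} (h : l ≠ []) : listMax l ∈ l := by
  induction l with
  | nil => simp at h
  | cons a t ih =>
    rcases eq_or_ne t [] with rfl | ht
    · simp [listMax]
    · have ht' := ih ht
      have hcons : listMax (a :: t) = max a (listMax t) := rfl
      rcases le_total a (listMax t) with hle | hle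
      · rw [hcons, max_eq_right hle]; exact List.mem_cons_of_mem _ ht'
      · rw [hcons, max_eq_left hle]; exact List.mem_cons_self

/-- The stack-sorting operator `S`: `S` of the empty word is the empty word, and
if `π` is nonempty, writing `π = L·m·R` where `m` is the greatest letter of `π`,
then `S(π) = S(L)·S(R)·m`. -/
def stackSort : List ℕ → List ℕ
  | [] => []
  | x :: xs =>
    stackSort ((x :: xs).take ((x :: xs).idxOf (listMax (x :: xs)))) ++
      stackSort ((x :: xs).drop ((x :: xs).idxOf (listMax (x :: xs)) + 1)) ++
      [listMax (x :: xs)]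
termination_by l => l.length
decreasing_by
  · have hm : listMax (x :: xs) ∈ x :: xs := listMax_mem (by simp)
    have hi : (x :: xs).idxOf (listMax (x :: xs)) < (x :: xs).length :=
      List.idxOf_lt_length_iff.mpr hm
    simp only [List.length_take, List.length_cons] at *
    omega
  · simp only [List.length_drop, List.length_cons]
    omega

/-- `π` is a permutation of `{1, …, n}`, viewed as a word containing each of
`1, …, n` exactly once. -/
def IsPermWord (n : ℕ) (π : List ℕ) : Prop := π.Perm (List.range' 1 n)

/-- The stack-sorting complexity of `π`: the least `k ≥ 0` such that `S^k(π)`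
is the identity word `1, 2, …, n` (where `n` is the length of `π`). -/
noncomputable def ssc (π : List ℕ) : ℕ :=
  sInf {k : ℕ | stackSort^[k] π = List.range' 1 π.length}

/-!
Write `π = L·n·R`. Then `S(π) = σ·n` with `σ = S(L)·S(R)` a permutation of `{1, …, n - 1}`, and
`S^k(σ·n) = S^k(σ)·n`, so `S^(k+1)(π)` is sorted iff `S^k(σ)` is; in particular `S^(n-1)` sorts
every permutation. Since `S(w)` always ends with `max w`, the last letter of `σ` is `max R`, or
`max L = n - 1` when `R` is empty. Hence, for `n ≥ 3`, `π` ends with `n, 1` iff `R = [1]` iff `σ`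
ends with `n - 1, 1`, and induction on `n` shows that `S^(n-2)(π)` is sorted iff `π` does not end
with `n, 1`. As the identity is a fixed point of `S`, `ssc(π) ≤ k` iff `S^k(π)` is sorted.
-/

open scoped List

theorem le_listMax {l : List ℕ} {a : ℕ} (h : a ∈ l) : a ≤ listMax l := by
  induction l with
  | nil => simp at h
  | cons b t ih =>
    rcases List.mem_cons.mp h with rfl | h
    · exact le_max_left _ _
    · exact (ih h).trans (le_max_right _ _)

theorem listMax_le {l : List ℕ} {b : ℕ} (h : ∀ a ∈ l, a ≤ b) : listMax l ≤ b := by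
  induction l with
  | nil => exact Nat.zero_le b
  | cons c t ih => exact max_le (h c (by simp)) (ih fun a ha => h a (by simp [ha]))

theorem exists_stackSort_eq_append_listMax {l : List ℕ} (hl : l ≠ []) :
    ∃ u, stackSort l = u ++ [listMax l] := by
  cases l with
  | nil => contradiction
  | cons x xs => rw [stackSort]; exact ⟨_, rfl⟩

theorem stackSort_append_cons {L R : List ℕ} {m : ℕ} (hL : ∀ a ∈ L, a < m)
    (hR : ∀ a ∈ R, a < m) :
    stackSort (L ++ m :: R) = stackSort L ++ stackSort R ++ [m] := by
  have hmax : listMax (L ++ m :: R) = m := by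
    refine le_antisymm (listMax_le fun a ha => ?_) (le_listMax (by simp))
    simp only [List.mem_append, List.mem_cons] at ha
    rcases ha with ha | rfl | ha
    exacts [(hL a ha).le, le_rfl, (hR a ha).le]
  have hidx : (L ++ m :: R).idxOf m = L.length := by
    simp [List.idxOf_append_of_notMem fun h => (hL m h).false]
  obtain ⟨x, xs, hx⟩ :=
    List.exists_cons_of_ne_nil (List.append_ne_nil_of_right_ne_nil L (List.cons_ne_nil m R))
  rw [hx, stackSort, ← hx, hmax, hidx, List.take_left]
  simp [List.drop_append, List.drop_eq_nil_of_le]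

theorem stackSort_perm (l : List ℕ) : stackSort l ~ l := by
  induction l using stackSort.induct with
  | case1 => rw [stackSort]
  | case2 x xs ihL ihR =>
    set l := x :: xs
    set i := l.idxOf (listMax l)
    have hi : i < l.length :=
      List.idxOf_lt_length_iff.mpr (listMax_mem (List.cons_ne_nil x xs))
    have hsplit : l.take i ++ listMax l :: l.drop (i + 1) = l := by
      rw [← List.getElem_idxOf hi, ← List.drop_eq_getElem_cons hi, List.take_append_drop]
    rw [stackSort]
    calc stackSort (l.take i) ++ stackSort (l.drop (i + 1)) ++ [listMax l]
        ~ l.take i ++ l.drop (i + 1) ++ [listMax l] := (ihL.append ihR).append_right _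
      _ ~ l.take i ++ listMax l :: l.drop (i + 1) := by
        rw [List.append_assoc]; exact (List.perm_append_singleton _ _).append_left _
      _ = l := hsplit

theorem range'_one_succ (n : ℕ) : List.range' 1 (n + 1) = List.range' 1 n ++ [n + 1] := by
  rw [List.range'_1_concat, Nat.add_comm 1 n]

theorem perm_range'_of_append_cons_perm {m : ℕ} {L R : List ℕ}
    (h : L ++ (m + 1) :: R ~ List.range' 1 (m + 1)) : L ++ R ~ List.range' 1 m := by
  refine List.Perm.cons_inv (a := m + 1) ?_
  calc (m + 1) :: (L ++ R) ~ L ++ (m + 1) :: R := List.perm_middle.symm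
    _ ~ List.range' 1 (m + 1) := h
    _ ~ (m + 1) :: List.range' 1 m := by rw [range'_one_succ]; simp

theorem exists_eq_append_cons_of_perm_range' {m : ℕ} {π : List ℕ}
    (h : π ~ List.range' 1 (m + 1)) :
    ∃ L R, π = L ++ (m + 1) :: R ∧ L ++ R ~ List.range' 1 m := by
  have hm : m + 1 ∈ π := h.mem_iff.mpr (by simp)
  obtain ⟨L, R, rfl⟩ := List.append_of_mem hm
  exact ⟨L, R, rfl, perm_range'_of_append_cons_perm h⟩

theorem mem_bounds_of_perm_range' {m a : ℕ} {l : List ℕ} (h : l ~ List.range' 1 m)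
    (ha : a ∈ l) : 1 ≤ a ∧ a < m + 1 := by
  simpa [add_comm] using h.mem_iff.mp ha

theorem stackSort_append_cons_of_perm_range' {m : ℕ} {L R : List ℕ}
    (h : L ++ R ~ List.range' 1 m) :
    stackSort (L ++ (m + 1) :: R) = stackSort L ++ stackSort R ++ [m + 1] :=
  stackSort_append_cons (fun a ha => (mem_bounds_of_perm_range' h (by simp [ha])).2)
    (fun a ha => (mem_bounds_of_perm_range' h (by simp [ha])).2)

theorem exists_stackSort_eq_append_of_perm_range' {m : ℕ} {π : List ℕ}
    (h : π ~ List.range' 1 (m + 1)) :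
    ∃ σ, stackSort π = σ ++ [m + 1] ∧ σ ~ List.range' 1 m := by
  obtain ⟨L, R, rfl, hLR⟩ := exists_eq_append_cons_of_perm_range' h
  exact ⟨_, stackSort_append_cons_of_perm_range' hLR,
    ((stackSort_perm L).append (stackSort_perm R)).trans hLR⟩

theorem stackSort_append_singleton {σ : List ℕ} {m : ℕ} (h : ∀ a ∈ σ, a < m) :
    stackSort (σ ++ [m]) = stackSort σ ++ [m] := by
  simpa [stackSort] using stackSort_append_cons (R := []) h (by simp)

theorem stackSort_iterate_append_singleton {σ : List ℕ} {m : ℕ} (h : ∀ a ∈ σ, a < m)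
    (k : ℕ) : stackSort^[k] (σ ++ [m]) = stackSort^[k] σ ++ [m] := by
  induction k generalizing σ with
  | zero => rfl
  | succ k ih =>
    rw [Function.iterate_succ_apply, Function.iterate_succ_apply, stackSort_append_singleton h,
      ih fun a ha => h a ((stackSort_perm σ).mem_iff.mp ha)]

theorem stackSort_range' (n : ℕ) : stackSort (List.range' 1 n) = List.range' 1 n := by
  induction n with
  | zero => rw [List.range'_zero, stackSort]
  | succ n ih => rw [range'_one_succ, stackSort_append_singleton (by simp; omega), ih]

theorem stackSort_iterate_succ_of_perm_range' {m : ℕ} {π σ : List ℕ}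
    (hσ : stackSort π = σ ++ [m + 1]) (hσm : σ ~ List.range' 1 m) (k : ℕ) :
    stackSort^[k + 1] π = stackSort^[k] σ ++ [m + 1] := by
  rw [Function.iterate_succ_apply, hσ, stackSort_iterate_append_singleton
    fun a ha => (mem_bounds_of_perm_range' hσm ha).2]

theorem stackSort_iterate_of_perm_range' {m : ℕ} {π : List ℕ}
    (h : π ~ List.range' 1 (m + 1)) :
    stackSort^[m] π = List.range' 1 (m + 1) := by
  induction m generalizing π with
  | zero => simpa using h
  | succ m ih =>
    obtain ⟨σ, hσ, hσm⟩ := exists_stackSort_eq_append_of_perm_range' h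
    rw [stackSort_iterate_succ_of_perm_range' hσ hσm, ih hσm, range'_one_succ (m + 1)]

theorem eq_singleton_one_of_listMax_eq_one {R : List ℕ} (hR : R ≠ []) (hnd : R.Nodup)
    (hpos : ∀ a ∈ R, 1 ≤ a) (hmax : listMax R = 1) : R = [1] := by
  have hall : ∀ a ∈ R, a = 1 := fun a ha => le_antisymm (hmax ▸ le_listMax ha) (hpos a ha)
  have hrep : R = List.replicate R.length 1 := List.eq_replicate_iff.2 ⟨rfl, hall⟩
  have hlen : R.length ≤ 1 := by rw [hrep] at hnd; simpa using hnd
  have hlen' : R.length ≠ 0 := by simpa using hR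
  rw [hrep, show R.length = 1 by omega, List.replicate_one]

theorem exists_eq_append_iff_stackSort {m : ℕ} (hm : m ≠ 0) {π : List ℕ}
    (h : π ~ List.range' 1 (m + 2)) :
    (∃ w, π = w ++ [m + 2, 1]) ↔ ∃ v, stackSort π = v ++ [m + 1, 1] ++ [m + 2] := by
  constructor
  · rintro ⟨w, rfl⟩
    have hw : w ++ [1] ~ List.range' 1 (m + 1) := perm_range'_of_append_cons_perm h
    have hmw : m + 1 ∈ w := by
      simpa [hm] using hw.mem_iff.mpr (by simp : m + 1 ∈ List.range' 1 (m + 1))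
    have hmax : listMax w = m + 1 := le_antisymm
      (listMax_le fun a ha => Nat.lt_succ_iff.mp (mem_bounds_of_perm_range' hw (by simp [ha])).2)
      (le_listMax hmw)
    obtain ⟨u, hu⟩ := exists_stackSort_eq_append_listMax (List.ne_nil_of_mem hmw)
    refine ⟨u, ?_⟩
    rw [show w ++ [m + 2, 1] = w ++ (m + 1 + 1) :: [1] from rfl,
      stackSort_append_cons_of_perm_range' hw, hu, hmax,
      show stackSort [1] = [1] from stackSort_range' 1]
    simp
  · rintro ⟨v, hv⟩
    obtain ⟨L, R, rfl, hLR⟩ := exists_eq_append_cons_of_perm_range' h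
    rw [stackSort_append_cons_of_perm_range' hLR, List.append_cancel_right_eq] at hv
    -- the last letter of `S L ++ S R` is `max R`, or `max L = m + 1` when `R = []`
    rcases eq_or_ne R [] with rfl | hR
    · obtain ⟨τ, hτ, -⟩ := exists_stackSort_eq_append_of_perm_range' (by simpa using hLR)
      have hlast : m + 1 = 1 := by simpa [hτ, stackSort] using congrArg List.getLast? hv
      omega
    · obtain ⟨u, hu⟩ := exists_stackSort_eq_append_listMax hR
      have hmax : listMax R = 1 := by simpa [hu] using congrArg List.getLast? hv
      have hRnd : R.Nodup := (hLR.nodup_iff.mpr List.nodup_range').of_append_right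
      have hRpos : ∀ a ∈ R, 1 ≤ a := fun a ha => (mem_bounds_of_perm_range' hLR (by simp [ha])).1
      exact ⟨L, by rw [eq_singleton_one_of_listMax_eq_one hR hRnd hRpos hmax]⟩

theorem stackSort_iterate_eq_range'_iff (m : ℕ) {π : List ℕ}
    (h : π ~ List.range' 1 (m + 2)) :
    stackSort^[m] π = List.range' 1 (m + 2) ↔ ¬ ∃ w, π = w ++ [m + 2, 1] := by
  induction m generalizing π with
  | zero =>
    rcases List.perm_pair.mp h with rfl | rfl
    · refine iff_of_true rfl fun ⟨w, hw⟩ => ?_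
      simpa using congrArg List.getLast? hw
    · exact iff_of_false (by decide) (not_not.2 ⟨[], rfl⟩)
  | succ m ih =>
    obtain ⟨σ, hσ, hσm⟩ := exists_stackSort_eq_append_of_perm_range' h
    rw [stackSort_iterate_succ_of_perm_range' hσ hσm, range'_one_succ (m + 2),
      List.append_cancel_right_eq, ih hσm, exists_eq_append_iff_stackSort m.succ_ne_zero h, hσ]
    exact not_congr (exists_congr fun v => Iff.of_eq (List.append_cancel_right_eq _ _ _).symm)

theorem ssc_le_iff {π : List ℕ} {k : ℕ} (h : ∃ j, stackSort^[j] π = List.range' 1 π.length) :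
    ssc π ≤ k ↔ stackSort^[k] π = List.range' 1 π.length := by
  refine ⟨fun hk => ?_, fun hk => Nat.sInf_le hk⟩
  have hssc : stackSort^[ssc π] π = List.range' 1 π.length := Nat.sInf_mem h
  rw [← Nat.sub_add_cancel hk, Function.iterate_add_apply, hssc,
    Function.iterate_fixed (stackSort_range' _)]

/-- For all `n ≥ 2`, a permutation `π` of `{1,…,n}` satisfies `ssc(π) ≤ n−2`
(is `(n−2)`-stack sortable) iff `π` does not end with the suffix `n, 1`. -/
theorem n_sub_two_stack_sortable_iff (n : ℕ) (hn : 2 ≤ n) (π : List ℕ) (hπ : IsPermWord n π) :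
    ssc π ≤ n - 2 ↔ ¬ ∃ w : List ℕ, π = w ++ [n, 1] := by
  obtain ⟨m, rfl⟩ : ∃ m, n = m + 2 := ⟨n - 2, by omega⟩
  have hlen : π.length = m + 2 := by simpa using hπ.length_eq
  have hsorted : stackSort^[m + 1] π = List.range' 1 π.length :=
    hlen ▸ stackSort_iterate_of_perm_range' hπ
  rw [ssc_le_iff ⟨_, hsorted⟩, hlen, Nat.add_sub_cancel]
  exact stackSort_iterate_eq_range'_iff m hπ
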